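/- With respect to the scalar product (f,g) = Σ_{x=0}^N w_x^{(α,β)} f(x) g(x), the adjoint of the backward shift T⁻ (where T⁻f(x) = f(x-1)) is given by (T⁻)* f(x) = q^{β+1} ([x-N]_q [x-α+1]_q / ([x+1]_q [x-N+β-α+2]_q)) f(x+1). -/
import Mathlib


open Finset

noncomputable def qnum (q y : ℝ) : ℝ := (1 - q ^ y) / (1 - q)

noncomputable def qPoch (a q : ℝ) (n : ℕ) : ℝ := ∏ j ∈ Finset.range n, (1 - a * q ^ j)

noncomputable def qHahnWeight (q α β : ℝ) (N x : ℕ) : ℝ :=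
  q ^ ((1 - α) * N) * (qPoch (q ^ (α - β - 1)) q N / qPoch (q ^ (-β)) q N) *
    q ^ ((β + 1) * x) *
    (qPoch (q ^ (-(N : ℝ))) q x * qPoch (q ^ (1 - α)) q x /
      (qPoch q q x * qPoch (q ^ (β - α - (N : ℝ) + 2)) q x))

lemma qPoch_succ (a q : ℝ) (n : ℕ) :
    qPoch a q (n + 1) = qPoch a q n * (1 - a * q ^ n) :=
  Finset.prod_range_succ _ _

lemma alg_step (C Bx E P1 P2 P3 P4 u v s t k : ℝ) (hk : k ≠ 0) (hs : s ≠ 0)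
    (ht : t ≠ 0) :
    C * (Bx * E) * (P1 * u * (P2 * v) / (P3 * s * (P4 * t))) =
    C * Bx * (P1 * P2 / (P3 * P4)) * (E * (u / k * (v / k) / (s / k * (t / k)))) := by
  have hr : u / k * (v / k) / (s / k * (t / k)) = u * v / (s * t) := by
    field_simp
  rw [hr]
  ring

lemma key_ratio (q α β : ℝ) (N x : ℕ) (hq : 0 < q) (hq1 : q ≠ 1)
    (ht : qnum q ((x : ℝ) - N + β - α + 2) ≠ 0) :
    qHahnWeight q α β N (x + 1) =
      qHahnWeight q α β N x *
        (q ^ (β + 1) *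
          (qnum q ((x : ℝ) - N) * qnum q ((x : ℝ) - α + 1) /
            (qnum q ((x : ℝ) + 1) * qnum q ((x : ℝ) - N + β - α + 2)))) := by
  have h1q : (1 : ℝ) - q ≠ 0 := sub_ne_zero.mpr (Ne.symm hq1)
  -- s := 1 - q ^ ((x:ℝ)+1) is nonzero
  have hs : (1 : ℝ) - q ^ ((x : ℝ) + 1) ≠ 0 := by
    have hxpos : (0 : ℝ) < (x : ℝ) + 1 := by positivity
    rcases lt_or_gt_of_ne hq1 with h | h
    · have := Real.rpow_lt_one hq.le h hxpos
      intro hcon; nlinarith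
    · have := Real.one_lt_rpow_iff_of_pos hq |>.mpr (Or.inl ⟨h, hxpos⟩)
      intro hcon; nlinarith
  have ht' : (1 : ℝ) - q ^ ((x : ℝ) - N + β - α + 2) ≠ 0 := by
    intro h
    exact ht (by simp [qnum, h])
  -- rewrite the products of length x+1
  have e1 : q ^ (-(N : ℝ)) * q ^ x = q ^ ((x : ℝ) - (N : ℝ)) := by
    rw [← Real.rpow_natCast q x, ← Real.rpow_add hq]
    ring_nf
  have e2 : q ^ (1 - α) * q ^ x = q ^ ((x : ℝ) - α + 1) := by
    rw [← Real.rpow_natCast q x, ← Real.rpow_add hq]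
    ring_nf
  have e3 : q * q ^ x = q ^ ((x : ℝ) + 1) := by
    rw [← Real.rpow_natCast q x]
    nth_rewrite 1 [← Real.rpow_one q]
    rw [← Real.rpow_add hq]
    ring_nf
  have e4 : q ^ (β - α - (N : ℝ) + 2) * q ^ x = q ^ ((x : ℝ) - N + β - α + 2) := by
    rw [← Real.rpow_natCast q x, ← Real.rpow_add hq]
    ring_nf
  have e5 : q ^ ((β + 1) * ((x : ℕ) + 1 : ℕ) : ℝ) = q ^ ((β + 1) * (x : ℕ) : ℝ) * q ^ (β + 1) := by
    rw [← Real.rpow_add hq]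
    push_cast
    ring_nf
  unfold qHahnWeight
  rw [qPoch_succ, qPoch_succ, qPoch_succ, qPoch_succ, e1, e2, e3, e4]
  push_cast at e5 ⊢
  rw [e5]
  simp only [qnum]
  exact alg_step _ _ _ _ _ _ _ _ _ _ _ _ h1q hs ht'

/-- with respect to the scalar product
`(f,g) = Σ_{x=0}^N w_x^{(α,β)} f(x) g(x)` (with shifts truncated to the grid, i.e.
`f(-1) = g(N+1) = 0`), the adjoint of the backward shift `T⁻` is
`(T⁻)* g(x) = q^{β+1} ([x-N]_q [x-α+1]_q / ([x+1]_q [x-N+β-α+2]_q)) g(x+1)`. -/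
theorem backward_shift_adjoint (q α β : ℝ) (N : ℕ) (hq : 0 < q) (hq1 : q ≠ 1)
    (hN : 0 < N)
    (hden1 : ∀ x : ℕ, x ≤ N → qnum q ((x : ℝ) - N + β - α + 2) ≠ 0)
    (hden2 : qPoch (q ^ (-β)) q N ≠ 0)
    (hden3 : ∀ x : ℕ, x ≤ N → qPoch (q ^ (β - α - (N : ℝ) + 2)) q x ≠ 0)
    (f g : ℤ → ℝ) (hf : f (-1) = 0) (hg : g (N + 1) = 0) :
    ∑ x ∈ Finset.range (N + 1), qHahnWeight q α β N x * f ((x : ℤ) - 1) * g (x : ℤ) =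
      ∑ x ∈ Finset.range (N + 1), qHahnWeight q α β N x * f (x : ℤ) *
        (q ^ (β + 1) *
          (qnum q ((x : ℝ) - N) * qnum q ((x : ℝ) - α + 1) /
            (qnum q ((x : ℝ) + 1) * qnum q ((x : ℝ) - N + β - α + 2))) *
          g ((x : ℤ) + 1)) := by
  rw [Finset.sum_range_succ' (fun x : ℕ =>
      qHahnWeight q α β N x * f ((x : ℤ) - 1) * g (x : ℤ)) N]
  rw [Finset.sum_range_succ]
  simp only [Nat.cast_zero, CharP.cast_eq_zero, zero_sub, hf, mul_zero, zero_mul, add_zero,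
    hg, mul_zero]
  apply Finset.sum_congr rfl
  intro x hx
  have hxN : x ≤ N := le_of_lt (Finset.mem_range.mp hx)
  have hc1 : ((x : ℤ) + 1) - 1 = (x : ℤ) := by ring
  push_cast
  rw [hc1, key_ratio q α β N x hq hq1 (hden1 x hxN)]
  ring
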